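/- For positive integers k < n with gcd(k,n) = 1, the Gaussian binomial coefficient satisfies: (1 + q + ⋯ + q^{n-1}) divides binom(n,k)_q in ℤ[q], and the quotient binom(n,k)_q/(1+q+⋯+q^{n-1}) is a polynomial whose value at q = 1 is C(n,k)/n. -/
import Mathlib


open Polynomial Finset

/-- Numerator of the Gaussian binomial coefficient: `∏_{i=0}^{k-1} (1 - q^{n-i})`. -/
noncomputable def gaussNum (n k : ℕ) : Polynomial ℤ :=
  ∏ i ∈ Finset.range k, (1 - X ^ (n - i))

/-- Denominator of the Gaussian binomial coefficient: `∏_{i=1}^{k} (1 - q^i)`. -/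
noncomputable def gaussDen (k : ℕ) : Polynomial ℤ :=
  ∏ i ∈ Finset.range k, (1 - X ^ (i + 1))

lemma gaussDen_ne_zero (k : ℕ) : gaussDen k ≠ 0 := by
  intro h
  have h1 : (gaussDen k).eval 0 = 1 := by
    simp [gaussDen, eval_prod]
  rw [h] at h1
  simp at h1

lemma gaussDen_succ (k : ℕ) : gaussDen (k + 1) = gaussDen k * (1 - X ^ (k + 1)) :=
  prod_range_succ _ _

lemma gaussNum_succ_succ (n k : ℕ) :
    gaussNum (n + 1) (k + 1) = gaussNum n k * (1 - X ^ (n + 1)) := by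
  rw [gaussNum, prod_range_succ']
  congr 1
  · refine Finset.prod_congr rfl fun i hi => ?_
    congr 2
    omega

lemma gaussNum_succ (n k : ℕ) :
    gaussNum n (k + 1) = gaussNum n k * (1 - X ^ (n - k)) :=
  prod_range_succ _ _

/-- The Gaussian binomial coefficient is a polynomial in `ℤ[q]` whose value at `q = 1`
equals the ordinary binomial coefficient. -/
lemma gauss_exists : ∀ n k : ℕ, k ≤ n → ∃ R : Polynomial ℤ,
    R * gaussDen k = gaussNum n k ∧ R.eval 1 = n.choose k := by
  intro n
  induction n with
  | zero =>
    intro k hk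
    interval_cases k
    exact ⟨1, by simp [gaussDen, gaussNum], by simp⟩
  | succ n ih =>
    intro k hk
    match k with
    | 0 => exact ⟨1, by simp [gaussDen, gaussNum], by simp⟩
    | (j + 1) =>
      rcases eq_or_lt_of_le hk with heq | hlt
      · refine ⟨1, ?_, ?_⟩
        · rw [one_mul, ← heq, gaussDen, gaussNum, ← Finset.prod_range_reflect]
          refine Finset.prod_congr rfl fun i hi => ?_
          simp only [Finset.mem_range] at hi
          congr 2
          omega
        · rw [← heq]
          simp
      · have hj : j + 1 ≤ n := by omega
        obtain ⟨R1, h1, e1⟩ := ih (j + 1) hj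
        obtain ⟨R2, h2, e2⟩ := ih j (by omega)
        have key : (X : Polynomial ℤ) ^ (n - j) * X ^ (j + 1) = X ^ (n + 1) := by
          rw [← pow_add]
          congr 1
          omega
        refine ⟨R1 + X ^ (n - j) * R2, ?_, ?_⟩
        · calc (R1 + X ^ (n - j) * R2) * gaussDen (j + 1)
              = R1 * gaussDen (j + 1) + X ^ (n - j) * (R2 * gaussDen j) * (1 - X ^ (j + 1)) := by
                rw [gaussDen_succ]; ring
            _ = gaussNum n j * (1 - X ^ (n - j))
                + X ^ (n - j) * gaussNum n j * (1 - X ^ (j + 1)) := by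
                rw [h1, h2, gaussNum_succ]
            _ = gaussNum (n + 1) (j + 1) := by
                rw [gaussNum_succ_succ, ← key]; ring
        · have : ((R1 + X ^ (n - j) * R2).eval 1 : ℤ)
              = R1.eval 1 + R2.eval 1 := by simp
          rw [this, e1, e2, Nat.choose_succ_succ]
          push_cast
          ring

/-- For `0 < k < n` coprime, `1 + q + ⋯ + q^{n-1}` divides `binom(n,k)_q` in
`ℤ[q]`, and the quotient evaluated at `q = 1` equals `C(n,k)/n`. -/
theorem geom_sum_dvd_gaussian_binomial (n k : ℕ) (hk0 : 0 < k) (hkn : k < n)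
    (hcop : Nat.gcd k n = 1)
    (P : Polynomial ℤ) (hP : P * gaussDen k = gaussNum n k) :
    (∑ i ∈ Finset.range n, (X : Polynomial ℤ) ^ i) ∣ P ∧
    ∀ Q : Polynomial ℤ, Q * (∑ i ∈ Finset.range n, (X : Polynomial ℤ) ^ i) = P →
      Q.eval 1 * (n : ℤ) = n.choose k := by
  obtain ⟨n', rfl⟩ : ∃ n', n = n' + 1 := ⟨n - 1, by omega⟩
  obtain ⟨k', rfl⟩ : ∃ k', k = k' + 1 := ⟨k - 1, by omega⟩
  obtain ⟨R0, hR0, e0⟩ := gauss_exists (n' + 1) (k' + 1) hkn.le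
  have hPR0 : P = R0 := mul_right_cancel₀ (gaussDen_ne_zero _) (hP.trans hR0.symm)
  have hPeval : P.eval 1 = ((n' + 1).choose (k' + 1) : ℤ) := by rw [hPR0, e0]
  obtain ⟨R, hR, -⟩ := gauss_exists n' k' (by omega)
  set G : Polynomial ℤ := ∑ i ∈ Finset.range (n' + 1), X ^ i with hGdef
  set Gk : Polynomial ℤ := ∑ i ∈ Finset.range (k' + 1), X ^ i with hGkdef
  -- step: P * (1 - X^(k'+1)) = R * (1 - X^(n'+1))
  have step1 : P * (1 - X ^ (k' + 1)) * gaussDen k'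
      = R * (1 - X ^ (n' + 1)) * gaussDen k' := by
    have h := hP
    rw [gaussDen_succ, gaussNum_succ_succ, ← hR] at h
    linear_combination h
  have step2 : P * (1 - X ^ (k' + 1)) = R * (1 - X ^ (n' + 1)) :=
    mul_right_cancel₀ (gaussDen_ne_zero k') step1
  have hX1 : (X - 1 : Polynomial ℤ) ≠ 0 := by
    simpa using X_sub_C_ne_zero (1 : ℤ)
  have step3 : P * Gk * (X - 1) = R * G * (X - 1) := by
    have h1 : Gk * (X - 1) = X ^ (k' + 1) - 1 := geom_sum_mul X (k' + 1)
    have h2 : G * (X - 1) = X ^ (n' + 1) - 1 := geom_sum_mul X (n' + 1)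
    calc P * Gk * (X - 1) = P * (X ^ (k' + 1) - 1) := by rw [mul_assoc, h1]
      _ = - (P * (1 - X ^ (k' + 1))) := by ring
      _ = - (R * (1 - X ^ (n' + 1))) := by rw [step2]
      _ = R * (X ^ (n' + 1) - 1) := by ring
      _ = R * G * (X - 1) := by rw [mul_assoc, h2]
  have step4 : P * Gk = R * G := mul_right_cancel₀ hX1 step3
  -- move to ℂ[X] to get divisibility
  have hGmonic : G.Monic := monic_geom_sum_X (by omega)
  set f := Int.castRingHom ℂ with hf
  have hmapmul : P.map f * Gk.map f = R.map f * G.map f := by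
    rw [← Polynomial.map_mul, ← Polynomial.map_mul, step4]
  have hdvdC : G.map f ∣ P.map f * Gk.map f := ⟨R.map f, by rw [hmapmul]; ring⟩
  have hGmap : G.map f = ∑ i ∈ Finset.range (n' + 1), (X : Polynomial ℂ) ^ i := by
    simp [hGdef, Polynomial.map_sum]
  have hGkmap : Gk.map f = ∑ i ∈ Finset.range (k' + 1), (X : Polynomial ℂ) ^ i := by
    simp [hGkdef, Polynomial.map_sum]
  have hcop' : IsCoprime (G.map f) (Gk.map f) := by
    rw [← EuclideanDomain.gcd_isUnit_iff]
    by_contra hu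
    set d := EuclideanDomain.gcd (G.map f) (Gk.map f) with hd
    have hd1 : d ∣ G.map f := EuclideanDomain.gcd_dvd_left _ _
    have hd2 : d ∣ Gk.map f := EuclideanDomain.gcd_dvd_right _ _
    have hGne : G.map f ≠ 0 := by
      intro h0
      have := hGmonic.ne_zero
      exact this ((Polynomial.map_eq_zero_iff (f := f) Int.cast_injective).mp h0)
    have hdne : d ≠ 0 := by
      intro h0
      exact hGne ((EuclideanDomain.gcd_eq_zero_iff.mp (hd ▸ h0)).1)
    have hdeg : 0 < d.degree := Polynomial.degree_pos_of_ne_zero_of_nonunit hdne hu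
    obtain ⟨z, hz⟩ := Complex.exists_root hdeg
    have hroot : ∀ p : Polynomial ℂ, d ∣ p → p.eval z = 0 := by
      rintro p ⟨c, rfl⟩
      rw [eval_mul, hz, zero_mul]
    have hzG : (∑ i ∈ Finset.range (n' + 1), z ^ i) = 0 := by
      have := hroot _ hd1
      rwa [hGmap, eval_geom_sum] at this
    have hzGk : (∑ i ∈ Finset.range (k' + 1), z ^ i) = 0 := by
      have := hroot _ hd2
      rwa [hGkmap, eval_geom_sum] at this
    have hzn : z ^ (n' + 1) = 1 := by
      have := geom_sum_mul z (n' + 1)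
      rw [hzG, zero_mul] at this
      exact sub_eq_zero.mp this.symm
    have hzk : z ^ (k' + 1) = 1 := by
      have := geom_sum_mul z (k' + 1)
      rw [hzGk, zero_mul] at this
      exact sub_eq_zero.mp this.symm
    have hz1 : z ≠ 1 := by
      intro h
      rw [h] at hzG
      simp at hzG
      have h2 : ((n' + 1 : ℕ) : ℂ) = 0 := by push_cast; exact hzG
      rw [Nat.cast_eq_zero] at h2
      omega
    have hz0 : z ≠ 0 := by
      intro h
      rw [h] at hzn
      simp at hzn
    apply hz1
    have hb : (1 : ℤ) = (k' + 1 : ℕ) * Nat.gcdA (k' + 1) (n' + 1)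
        + (n' + 1 : ℕ) * Nat.gcdB (k' + 1) (n' + 1) := by
      have := Nat.gcd_eq_gcd_ab (k' + 1) (n' + 1)
      rwa [hcop, Nat.cast_one] at this
    have hk1 : z ^ ((k' + 1 : ℕ) : ℤ) = 1 := by rw [zpow_natCast, hzk]
    have hn1 : z ^ ((n' + 1 : ℕ) : ℤ) = 1 := by rw [zpow_natCast, hzn]
    calc z = z ^ (1 : ℤ) := (zpow_one z).symm
      _ = z ^ (((k' + 1 : ℕ) : ℤ) * Nat.gcdA (k' + 1) (n' + 1)
            + ((n' + 1 : ℕ) : ℤ) * Nat.gcdB (k' + 1) (n' + 1)) := by rw [← hb]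
      _ = (z ^ ((k' + 1 : ℕ) : ℤ)) ^ Nat.gcdA (k' + 1) (n' + 1)
            * (z ^ ((n' + 1 : ℕ) : ℤ)) ^ Nat.gcdB (k' + 1) (n' + 1) := by
          rw [zpow_add₀ hz0, zpow_mul, zpow_mul]
      _ = 1 := by rw [hk1, hn1, one_zpow, one_zpow, one_mul]
  have hdvdmap : G.map f ∣ P.map f := hcop'.dvd_of_dvd_mul_right hdvdC
  have hGdvd : G ∣ P := (Polynomial.map_dvd_map f Int.cast_injective hGmonic).mp hdvdmap
  refine ⟨hGdvd, fun Q hQ => ?_⟩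
  have hev : Q.eval 1 * G.eval 1 = P.eval 1 := by
    rw [← eval_mul, hQ]
  have hGev : G.eval 1 = (n' + 1 : ℤ) := by
    simp [hGdef, eval_geom_sum]
  rw [hGev] at hev
  rw [hPeval] at hev
  push_cast at hev ⊢
  linarith
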